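/- Let ε > 0 and let (c_i)_{i≥1} be real numbers with |c_i| ≥ ε for all i; put φ_i = [[1, 0],[c_i, 1]] ∈ SL(2,ℝ). Then there exists τ₀ > 0 such that for every τ > τ₀ the sequence (f^{(k)}(τ))_{k≥1} is unbounded. -/
import Mathlib


/-- The matrix `h^t = [[1, t],[0, 1]] ∈ SL(2,ℝ)`. -/
def hMat (t : ℝ) : Matrix (Fin 2) (Fin 2) ℝ := !![1, t; 0, 1]

/-- The kicked evolution `f^{(k)}(τ) = φ_k h^τ φ_{k-1} h^τ ⋯ φ_1 h^τ`. -/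
def kickedEvol (φ : ℕ → Matrix (Fin 2) (Fin 2) ℝ) (τ : ℝ) :
    ℕ → Matrix (Fin 2) (Fin 2) ℝ
  | 0 => 1
  | k + 1 => φ (k + 1) * hMat τ * kickedEvol φ τ k

/-- A sequence of matrices is bounded if all its entries are uniformly bounded
(equivalently, it lies in a compact subset). -/
def MatSeqBounded (f : ℕ → Matrix (Fin 2) (Fin 2) ℝ) : Prop :=
  ∃ C : ℝ, ∀ k : ℕ, 1 ≤ k → ∀ i j : Fin 2, |f k i j| ≤ C

lemma entry01 (c τ : ℝ) (M : Matrix (Fin 2) (Fin 2) ℝ) :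
    ((!![1, 0; c, 1] : Matrix (Fin 2) (Fin 2) ℝ) * hMat τ * M) 0 1
      = M 0 1 + τ * M 1 1 := by
  simp [hMat, Matrix.mul_apply, Fin.sum_univ_two]

lemma entry11 (c τ : ℝ) (M : Matrix (Fin 2) (Fin 2) ℝ) :
    ((!![1, 0; c, 1] : Matrix (Fin 2) (Fin 2) ℝ) * hMat τ * M) 1 1
      = c * M 0 1 + (c * τ + 1) * M 1 1 := by
  simp [hMat, Matrix.mul_apply, Fin.sum_univ_two]

/-- for lower-triangular kicks `φ_i = [[1, 0],[c_i, 1]]` with `|c_i| ≥ ε > 0`,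
there is `τ₀ > 0` such that for every period `τ > τ₀` the kicked evolution is unbounded. -/
theorem stmt_12 (ε : ℝ) (hε : 0 < ε) (c : ℕ → ℝ) (hc : ∀ i : ℕ, 1 ≤ i → ε ≤ |c i|)
    (φ : ℕ → Matrix (Fin 2) (Fin 2) ℝ)
    (hφ : ∀ i : ℕ, 1 ≤ i → φ i = !![1, 0; c i, 1]) :
    ∃ τ₀ > (0 : ℝ), ∀ τ : ℝ, τ₀ < τ → ¬ MatSeqBounded (kickedEvol φ τ) := by
  refine ⟨8 / ε, by positivity, ?_⟩
  intro τ hτ hB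
  have hτ0 : (0:ℝ) < τ := lt_trans (by positivity) hτ
  have hετ : 8 ≤ ε * τ := by
    have := (div_lt_iff₀ hε).mp hτ
    nlinarith
  set f := kickedEvol φ τ with hf
  -- key invariant
  have key : ∀ k : ℕ, |f k 0 1| ≤ (τ / 2) * |f k 1 1| ∧ (2:ℝ)^k ≤ |f k 1 1| := by
    intro k
    induction k with
    | zero =>
      have h0 : f 0 = 1 := rfl
      rw [h0]
      norm_num [Matrix.one_apply]
      positivity
    | succ k ih =>
      obtain ⟨hx, hy⟩ := ih
      have hy0 : (0:ℝ) < |f k 1 1| := lt_of_lt_of_le (by positivity) hy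
      have hck : ε ≤ |c (k+1)| := hc (k+1) (Nat.le_add_left 1 k)
      have hstep : f (k+1) = φ (k+1) * hMat τ * f k := rfl
      have hφk := hφ (k+1) (Nat.le_add_left 1 k)
      set x := f k 0 1
      set y := f k 1 1
      have e01 : f (k+1) 0 1 = x + τ * y := by
        rw [hstep, hφk]; exact entry01 (c (k+1)) τ (f k)
      have e11 : f (k+1) 1 1 = c (k+1) * x + (c (k+1) * τ + 1) * y := by
        rw [hstep, hφk]; exact entry11 (c (k+1)) τ (f k)
      set C := c (k+1)
      -- lower bound on |y'|
      have hylb : 3 * |y| ≤ |f (k+1) 1 1| := by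
        rw [e11]
        have h1 : |C * τ * y| - |C * x| - |y| ≤ |C * x + (C * τ + 1) * y| := by
          have heq : C * x + (C * τ + 1) * y = (C * τ * y) + (C * x + y) := by ring
          rw [heq]
          have hle : |C * x + y| ≤ |C * x| + |y| := abs_add_le _ _
          have h5 := abs_sub_abs_le_abs_sub (C * τ * y) (-(C * x + y))
          rw [abs_neg, sub_neg_eq_add] at h5
          linarith
        have h2 : |C * x| ≤ |C| * ((τ/2) * |y|) := by
          rw [abs_mul]
          exact mul_le_mul_of_nonneg_left hx (abs_nonneg _)
        have h3 : |C * τ * y| = |C| * τ * |y| := by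
          rw [abs_mul, abs_mul, abs_of_pos hτ0]
        have h4 : ε ≤ |C| := hck
        nlinarith [mul_nonneg (mul_nonneg (sub_nonneg.mpr h4) hτ0.le) (abs_nonneg y),
          mul_nonneg (sub_nonneg.mpr hετ) (abs_nonneg y)]
      constructor
      · rw [e01]
        have : |x + τ * y| ≤ |x| + τ * |y| := by
          calc |x + τ * y| ≤ |x| + |τ * y| := abs_add_le _ _
          _ = |x| + τ * |y| := by rw [abs_mul, abs_of_pos hτ0]
        nlinarith
      · calc (2:ℝ)^(k+1) = 2 * 2^k := by ring
          _ ≤ 2 * |y| := by linarith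
          _ ≤ 3 * |y| := by linarith [abs_nonneg y]
          _ ≤ |f (k+1) 1 1| := hylb
  obtain ⟨Cb, hCb⟩ := hB
  obtain ⟨n, hn⟩ := pow_unbounded_of_one_lt Cb (one_lt_two (α := ℝ))
  have h1 := (key (n+1)).2
  have h2 := hCb (n+1) (Nat.le_add_left 1 n) 1 1
  have : (2:ℝ)^n ≤ 2^(n+1) := by
    apply pow_le_pow_right₀ (by norm_num) (Nat.le_succ n)
  linarith
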